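/- Let p₀, q₀ be coprime integers with q₀ > 1 and p₀ ≠ 0, and let k = ⌊p₀/q₀⌋. Then there exist integers p₁, q₁, p₂, q₂ with q₁ ≥ 1, q₂ ≥ 1, p₁ + p₂ = p₀, q₁ + q₂ = q₀, p₁·q₀ − p₀·q₁ = 1, and such that k ≤ p₂/q₂ and p₁/q₁ ≤ k + 1 (as rational numbers). -/
import Mathlib


theorem slope_triad_exists (p₀ q₀ : ℤ) (hcop : IsCoprime p₀ q₀) (hq : 1 < q₀)
    (hp : p₀ ≠ 0) (k : ℤ) (hk : k = ⌊(p₀ : ℚ) / q₀⌋) :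
    ∃ p₁ q₁ p₂ q₂ : ℤ, 1 ≤ q₁ ∧ 1 ≤ q₂ ∧ p₁ + p₂ = p₀ ∧ q₁ + q₂ = q₀ ∧
      p₁ * q₀ - p₀ * q₁ = 1 ∧ (k : ℚ) ≤ (p₂ : ℚ) / q₂ ∧ (p₁ : ℚ) / q₁ ≤ (k : ℚ) + 1 := by
  obtain ⟨a, b, hab⟩ := id hcop
  have hq0 : (0:ℤ) < q₀ := by omega
  have hndvd : ¬ q₀ ∣ p₀ := by
    intro hdvd
    have hu : IsUnit q₀ := hcop.isUnit_of_dvd' hdvd dvd_rfl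
    rcases Int.isUnit_iff.mp hu with h | h <;> omega
  set q₁ := (-a) % q₀ with hq₁def
  have hq₁nonneg : 0 ≤ q₁ := Int.emod_nonneg _ (by omega)
  have hq₁lt : q₁ < q₀ := Int.emod_lt_of_pos _ hq0
  set p₁ := b - p₀ * ((-a) / q₀) with hp₁def
  have key : 1 + p₀ * q₁ = q₀ * p₁ := by
    have h := Int.emod_def (-a) q₀
    rw [hq₁def, h, hp₁def]
    linear_combination -hab
  have hq₁ne : q₁ ≠ 0 := by
    intro h0
    rw [h0, mul_zero] at key
    have : q₀ ≤ 1 := Int.le_of_dvd one_pos ⟨p₁, by omega⟩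
    omega
  have hq₁pos : 1 ≤ q₁ := by omega
  -- floor bounds
  have hqQ : (0:ℚ) < (q₀:ℚ) := by exact_mod_cast hq0
  have h1 : (k:ℚ) ≤ (p₀:ℚ) / q₀ := hk ▸ Int.floor_le _
  have h2 : (p₀:ℚ) / q₀ < (k:ℚ) + 1 := hk ▸ Int.lt_floor_add_one _
  have hlow' : k * q₀ ≤ p₀ := by
    have := (le_div_iff₀ hqQ).mp h1
    exact_mod_cast this
  have hhigh : p₀ ≤ (k + 1) * q₀ - 1 := by
    have := (div_lt_iff₀ hqQ).mp h2
    have : p₀ < (k + 1) * q₀ := by exact_mod_cast this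
    omega
  have hlow : k * q₀ + 1 ≤ p₀ := by
    rcases eq_or_lt_of_le hlow' with h | h
    · exact absurd ⟨k, h.symm ▸ (mul_comm k q₀)⟩ hndvd
    · omega
  refine ⟨p₁, q₁, p₀ - p₁, q₀ - q₁, hq₁pos, by omega, by ring, by ring, by linarith [key], ?_, ?_⟩
  · have hq₂pos : (0:ℚ) < ((q₀ - q₁ : ℤ) : ℚ) := by
      have : (0:ℤ) < q₀ - q₁ := by omega
      exact_mod_cast this
    rw [le_div_iff₀ hq₂pos]
    have hint : k * (q₀ - q₁) ≤ p₀ - p₁ := by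
      have h1 : (0:ℤ) ≤ (p₀ - (k*q₀+1)) * (q₀ - q₁) :=
        mul_nonneg (by omega) (by omega)
      nlinarith [key, h1, hq0, hq₁pos, hq₁lt]
    calc (k:ℚ) * ((q₀ - q₁ : ℤ) : ℚ) = ((k * (q₀ - q₁) : ℤ) : ℚ) := by push_cast; ring
      _ ≤ ((p₀ - p₁ : ℤ) : ℚ) := by exact_mod_cast hint
      _ = _ := by push_cast; ring
  · have hq₁posQ : (0:ℚ) < ((q₁ : ℤ) : ℚ) := by exact_mod_cast hq₁pos
    rw [div_le_iff₀ hq₁posQ]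
    have hint : p₁ ≤ (k + 1) * q₁ := by
      have h2 : (0:ℤ) ≤ ((k+1)*q₀ - 1 - p₀) * q₁ :=
        mul_nonneg (by omega) (by omega)
      nlinarith [key, h2, hq0, hq₁pos]
    calc ((p₁:ℤ):ℚ) ≤ (((k+1) * q₁ : ℤ) : ℚ) := by exact_mod_cast hint
      _ = ((k:ℚ)+1) * ((q₁:ℤ):ℚ) := by push_cast; ring
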